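/- Let 1 < γ < 2, a > 0, and define P(ρ) = (a/(γ-1))ρ^γ so that P''(ρ) = aγρ^{γ-2}. Then for any ρ₁, ρ₂ > 0 and any z lying in the closed interval between ρ₁ and ρ₂, one has P''(z)(ρ₁ - ρ₂)² ≥ aγ(ρ₁^{γ/2} - ρ₂^{γ/2})². -/
import Mathlib


open Real

theorem stmt_0 (γ a : ℝ) (hγ1 : 1 < γ) (hγ2 : γ < 2) (ha : 0 < a)
    (ρ₁ ρ₂ z : ℝ) (hρ₁ : 0 < ρ₁) (hρ₂ : 0 < ρ₂)
    (hz : z ∈ Set.uIcc ρ₁ ρ₂) :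
    a * γ * z ^ (γ - 2) * (ρ₁ - ρ₂) ^ 2 ≥ a * γ * (ρ₁ ^ (γ / 2) - ρ₂ ^ (γ / 2)) ^ 2 := by
  have hag : 0 < a * γ := mul_pos ha (by linarith)
  rw [ge_iff_le, show a * γ * z ^ (γ - 2) * (ρ₁ - ρ₂) ^ 2 = a * γ * (z ^ (γ - 2) * (ρ₁ - ρ₂) ^ 2) by ring]
  apply mul_le_mul_of_nonneg_left _ hag.le
  wlog h12 : ρ₁ ≤ ρ₂ generalizing ρ₁ ρ₂ with H
  · have h := H ρ₂ ρ₁ hρ₂ hρ₁ (Set.uIcc_comm ρ₁ ρ₂ ▸ hz) (le_of_not_ge h12)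
    rw [show (ρ₁ ^ (γ / 2) - ρ₂ ^ (γ / 2)) ^ 2 = (ρ₂ ^ (γ / 2) - ρ₁ ^ (γ / 2)) ^ 2 by ring,
      show (ρ₁ - ρ₂) ^ 2 = (ρ₂ - ρ₁) ^ 2 by ring]
    exact h
  rw [Set.uIcc_of_le h12] at hz
  obtain ⟨hz1, hz2⟩ := hz
  have hz0 : 0 < z := lt_of_lt_of_le hρ₁ hz1
  have hmono : ρ₁ ^ (γ / 2) ≤ ρ₂ ^ (γ / 2) :=
    Real.rpow_le_rpow hρ₁.le h12 (by linarith)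
  have h1 : ρ₂ ^ (γ / 2 - 1) * ρ₁ ≤ ρ₁ ^ (γ / 2) := by
    have hle : ρ₂ ^ (γ / 2 - 1) ≤ ρ₁ ^ (γ / 2 - 1) :=
      Real.rpow_le_rpow_of_nonpos hρ₁ h12 (by linarith)
    calc ρ₂ ^ (γ / 2 - 1) * ρ₁ ≤ ρ₁ ^ (γ / 2 - 1) * ρ₁ :=
          mul_le_mul_of_nonneg_right hle hρ₁.le
      _ = ρ₁ ^ (γ / 2) := by
          rw [← Real.rpow_add_one hρ₁.ne']; norm_num
  have h2 : ρ₂ ^ (γ / 2 - 1) * ρ₂ = ρ₂ ^ (γ / 2) := by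
    rw [← Real.rpow_add_one hρ₂.ne']; norm_num
  have key : ρ₂ ^ (γ / 2) - ρ₁ ^ (γ / 2) ≤ ρ₂ ^ (γ / 2 - 1) * (ρ₂ - ρ₁) := by
    nlinarith
  have hsq : (ρ₂ ^ (γ / 2) - ρ₁ ^ (γ / 2)) ^ 2 ≤ (ρ₂ ^ (γ / 2 - 1) * (ρ₂ - ρ₁)) ^ 2 := by
    apply sq_le_sq'
    · have : 0 ≤ ρ₂ ^ (γ / 2 - 1) * (ρ₂ - ρ₁) :=
        mul_nonneg (Real.rpow_nonneg hρ₂.le _) (by linarith)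
      linarith
    · exact key
  have hexp : (ρ₂ ^ (γ / 2 - 1)) ^ 2 = ρ₂ ^ (γ - 2) := by
    rw [← Real.rpow_natCast (ρ₂ ^ (γ / 2 - 1)) 2, ← Real.rpow_mul hρ₂.le]
    norm_num
    ring_nf
  have hzle : ρ₂ ^ (γ - 2) ≤ z ^ (γ - 2) :=
    Real.rpow_le_rpow_of_nonpos hz0 hz2 (by linarith)
  have hsqnn : (0:ℝ) ≤ (ρ₂ - ρ₁) ^ 2 := sq_nonneg _
  rw [show (ρ₁ ^ (γ / 2) - ρ₂ ^ (γ / 2)) ^ 2 = (ρ₂ ^ (γ / 2) - ρ₁ ^ (γ / 2)) ^ 2 by ring,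
    show (ρ₁ - ρ₂) ^ 2 = (ρ₂ - ρ₁) ^ 2 by ring]
  calc (ρ₂ ^ (γ / 2) - ρ₁ ^ (γ / 2)) ^ 2 ≤ (ρ₂ ^ (γ / 2 - 1) * (ρ₂ - ρ₁)) ^ 2 := hsq
    _ = ρ₂ ^ (γ - 2) * (ρ₂ - ρ₁) ^ 2 := by rw [mul_pow, hexp]
    _ ≤ z ^ (γ - 2) * (ρ₂ - ρ₁) ^ 2 := mul_le_mul_of_nonneg_right hzle hsqnn
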